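/- Let n ≥ 1 and let f be a continuous nonnegative real-valued function on n×n real matrices satisfying the symmetry condition f(A) = |det A| · f(A⁻¹) for every invertible matrix A. Let M₁ ⊆ ℝⁿ be an open set, let φ : ℝⁿ → ℝⁿ be injective on M₁ and differentiable at every x ∈ M₁ with invertible derivative Dφ(x), set M₂ = φ(M₁), and let ψ : ℝⁿ → ℝⁿ restrict to the inverse of φ on M₂, differentiable at every y ∈ M₂ with Dψ(φ(x)) = (Dφ(x))⁻¹ for x ∈ M₁. Then the Lebesgue integrals of the distortion densities agree: ∫_{M₁} f(Dφ(x)) dx = ∫_{M₂} f(Dψ(y)) dy (as lower Lebesgue integrals of nonnegative functions). -/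

import Mathlib

/-! Substituting `y = φ x` in the right-hand integral produces the Jacobian factor
`|det Dφ(x)|` in front of `f (Dφ(x)⁻¹)`, and the symmetry condition turns this product
back into `f (Dφ(x))`. -/

open MeasureTheory

lemma ofReal_abs_det_mul_of_symm {n : ℕ} {f : Matrix (Fin n) (Fin n) ℝ → ℝ}
    (hf_sym : ∀ A : Matrix (Fin n) (Fin n) ℝ, IsUnit A.det → f A = |A.det| * f A⁻¹)
    {A : Matrix (Fin n) (Fin n) ℝ} (hA : IsUnit A.det) :
    ENNReal.ofReal |A.det| * ENNReal.ofReal (f A⁻¹) = ENNReal.ofReal (f A) := by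
  rw [← ENNReal.ofReal_mul (abs_nonneg _), ← hf_sym A hA]

theorem statement_0 (n : ℕ)
    (f : Matrix (Fin n) (Fin n) ℝ → ℝ)
    (hf_sym : ∀ A : Matrix (Fin n) (Fin n) ℝ, IsUnit A.det →
      f A = |A.det| * f A⁻¹)
    (M₁ M₂ : Set (Fin n → ℝ)) (hM₁ : IsOpen M₁)
    (φ : (Fin n → ℝ) → (Fin n → ℝ))
    (φ' ψ' : (Fin n → ℝ) → ((Fin n → ℝ) →L[ℝ] (Fin n → ℝ)))
    (hφ_inj : Set.InjOn φ M₁)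
    (hφ_deriv : ∀ x ∈ M₁, HasFDerivAt φ (φ' x) x)
    (hφ_invertible : ∀ x ∈ M₁,
      IsUnit (LinearMap.toMatrix' (φ' x).toLinearMap).det)
    (hM₂ : M₂ = φ '' M₁)
    (hψ_jac : ∀ x ∈ M₁,
      LinearMap.toMatrix' (ψ' (φ x)).toLinearMap =
        (LinearMap.toMatrix' (φ' x).toLinearMap)⁻¹) :
    ∫⁻ x in M₁, ENNReal.ofReal (f (LinearMap.toMatrix' (φ' x).toLinearMap)) =
    ∫⁻ y in M₂, ENNReal.ofReal (f (LinearMap.toMatrix' (ψ' y).toLinearMap)) := by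
  subst hM₂
  rw [lintegral_image_eq_lintegral_abs_det_fderiv_mul volume hM₁.measurableSet
    (fun x hx => (hφ_deriv x hx).hasFDerivWithinAt) hφ_inj]
  refine setLIntegral_congr_fun hM₁.measurableSet fun x hx => ?_
  rw [hψ_jac x hx, ContinuousLinearMap.det, ← LinearMap.det_toMatrix',
    ofReal_abs_det_mul_of_symm hf_sym (hφ_invertible x hx)]
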